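/- (Corollary: feasible clusterings give 1/t-approximations) Let U = {c^1,…,c^N} ⊆ ℝ^n be a finite set of nonnegative scenario vectors. Suppose t > 0, λ ∈ ℝ^{K×N} and μ ∈ ℝ^{N×K} satisfy: λ_{ki} ≥ 0 with Σ_{i∈[N]} λ_{ki} = 1 for all k ∈ [K]; μ_{ik} ≥ 0 with Σ_{k∈[K]} μ_{ik} = 1 for all i ∈ [N]; and t·c^i_j ≤ Σ_{k∈[K]} Σ_{ℓ∈[N]} μ_{ik} λ_{kℓ} c^ℓ_j for all i ∈ [N] and j ∈ [n]. Define ĉ^k = Σ_{i∈[N]} λ_{ki} c^i and C = {ĉ^1,…,ĉ^K}. If x̂ ∈ X minimizes max_{c ∈ C} cᵀx over X, then for every x ∈ X it holds that max_{c ∈ U} cᵀx̂ ≤ (1/t) · max_{c ∈ U} cᵀx. -/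

import Mathlib

/-!
The clustered scenarios `ĉ = λ c` are convex combinations of the original ones, so on every
`x` their robust value is at most that of `c`. Conversely, feasibility says that `t c` is
dominated entrywise by `μ ĉ`, whose rows are convex combinations of the `ĉ`; on a nonnegative
`x̂` this gives `t · max_i cⁱ x̂ ≤ max_k ĉᵏ x̂`. Chaining the two through the optimality of `x̂`
for `ĉ` yields `t · max_i cⁱ x̂ ≤ max_i cⁱ x`.
-/

open Finset Matrix

theorem Matrix.mulVec_le_mulVec_of_le {m n : Type*} [Fintype n] {A B : Matrix m n ℝ}
    (hAB : ∀ i j, A i j ≤ B i j) {x : n → ℝ} (hx : 0 ≤ x) : A *ᵥ x ≤ B *ᵥ x :=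
  fun i => sum_le_sum fun j _ => mul_le_mul_of_nonneg_right (hAB i j) (hx j)

theorem Matrix.mulVec_apply_le_sup' {m n : Type*} [Fintype n] [Nonempty n] {A : Matrix m n ℝ}
    (hA₀ : ∀ i j, 0 ≤ A i j) (hA₁ : ∀ i, ∑ j, A i j = 1) (v : n → ℝ) (i : m) :
    (A *ᵥ v) i ≤ univ.sup' univ_nonempty v := by
  have h := centerMass_le_sup (s := univ) (f := v) (fun j _ => hA₀ i j) (by simp [hA₁])
  rwa [centerMass_eq_of_sum_1 _ _ (hA₁ i)] at h

section

variable {ι κ σ : Type*} [Fintype ι] [Nonempty ι] [Fintype κ] [Nonempty κ] [Fintype σ]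

def robustValue (C : Matrix ι σ ℝ) (x : σ → ℝ) : ℝ :=
  univ.sup' univ_nonempty (C *ᵥ x)

theorem robustValue_le_of_eq_mul {A : Matrix κ ι ℝ} (hA₀ : ∀ k i, 0 ≤ A k i)
    (hA₁ : ∀ k, ∑ i, A k i = 1) {B : Matrix κ σ ℝ} {C : Matrix ι σ ℝ} (hB : B = A * C)
    (x : σ → ℝ) : robustValue B x ≤ robustValue C x := by
  rw [robustValue, hB, ← mulVec_mulVec]
  exact sup'_le _ _ fun k _ => mulVec_apply_le_sup' hA₀ hA₁ _ k

theorem mul_robustValue_le {A : Matrix ι κ ℝ} (hA₀ : ∀ i k, 0 ≤ A i k)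
    (hA₁ : ∀ i, ∑ k, A i k = 1) {t : ℝ} {B : Matrix κ σ ℝ} {C : Matrix ι σ ℝ}
    (hCB : ∀ i j, t * C i j ≤ (A * B) i j) {x : σ → ℝ} (hx : 0 ≤ x) :
    t * robustValue C x ≤ robustValue B x := by
  obtain ⟨i, -, hi⟩ := exists_mem_eq_sup' (univ_nonempty (α := ι)) (C *ᵥ x)
  calc t * robustValue C x = ((t • C) *ᵥ x) i := by rw [robustValue, hi, smul_mulVec]; rfl
    _ ≤ ((A * B) *ᵥ x) i := mulVec_le_mulVec_of_le hCB hx i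
    _ ≤ robustValue B x := by rw [← mulVec_mulVec]; exact mulVec_apply_le_sup' hA₀ hA₁ _ i

end

theorem stmt_5_general {n N K : ℕ} [NeZero N] [NeZero K]
    (c : Fin N → Fin n → ℝ)
    (X : Set (Fin n → ℝ)) (hXnonneg : ∀ x ∈ X, ∀ j, 0 ≤ x j)
    (t : ℝ) (ht : 0 < t)
    (lam : Fin K → Fin N → ℝ) (mu : Fin N → Fin K → ℝ)
    (hlam_nonneg : ∀ k i, 0 ≤ lam k i) (hlam_sum : ∀ k, ∑ i, lam k i = 1)
    (hmu_nonneg : ∀ i k, 0 ≤ mu i k) (hmu_sum : ∀ i, ∑ k, mu i k = 1)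
    (hfeas : ∀ i j, t * c i j ≤ ∑ k, ∑ l, mu i k * lam k l * c l j)
    (chat : Fin K → Fin n → ℝ) (hchat : ∀ k j, chat k j = ∑ i, lam k i * c i j)
    (xhat : Fin n → ℝ) (hxhat : xhat ∈ X)
    (hopt : ∀ x ∈ X,
      (Finset.univ.sup' Finset.univ_nonempty fun k => ∑ j, chat k j * xhat j) ≤
        Finset.univ.sup' Finset.univ_nonempty fun k => ∑ j, chat k j * x j) :
    ∀ x ∈ X,
      (Finset.univ.sup' Finset.univ_nonempty fun i => ∑ j, c i j * xhat j) ≤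
        (1 / t) * (Finset.univ.sup' Finset.univ_nonempty fun i => ∑ j, c i j * x j) := by
  intro x hx
  change robustValue c xhat ≤ 1 / t * robustValue c x
  rw [one_div, inv_mul_eq_div, le_div_iff₀' ht]
  calc t * robustValue c xhat ≤ robustValue chat xhat :=
        mul_robustValue_le hmu_nonneg hmu_sum (fun i j => by
          show _ ≤ ∑ k, mu i k * chat k j
          simpa only [hchat, mul_sum, mul_assoc] using hfeas i j)
          (hXnonneg xhat hxhat)
    _ ≤ robustValue chat x := hopt x hx
    _ ≤ robustValue c x :=
        robustValue_le_of_eq_mul hlam_nonneg hlam_sum (funext₂ hchat) x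

/-- Any feasible solution `(t, λ, μ)` of the continuous clustering problem yields a
reduced scenario set whose robust optimizer is a `1/t`-approximation. -/
theorem stmt_5 {n N K : ℕ} [NeZero N] [NeZero K]
    (c : Fin N → Fin n → ℝ) (hc : ∀ i j, 0 ≤ c i j)
    (X : Set (Fin n → ℝ)) (hXnonneg : ∀ x ∈ X, ∀ j, 0 ≤ x j) (hXne : X.Nonempty)
    (t : ℝ) (ht : 0 < t)
    (lam : Fin K → Fin N → ℝ) (mu : Fin N → Fin K → ℝ)
    (hlam_nonneg : ∀ k i, 0 ≤ lam k i) (hlam_sum : ∀ k, ∑ i, lam k i = 1)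
    (hmu_nonneg : ∀ i k, 0 ≤ mu i k) (hmu_sum : ∀ i, ∑ k, mu i k = 1)
    (hfeas : ∀ i j, t * c i j ≤ ∑ k, ∑ l, mu i k * lam k l * c l j)
    (chat : Fin K → Fin n → ℝ) (hchat : ∀ k j, chat k j = ∑ i, lam k i * c i j)
    (xhat : Fin n → ℝ) (hxhat : xhat ∈ X)
    (hopt : ∀ x ∈ X,
      (Finset.univ.sup' Finset.univ_nonempty fun k => ∑ j, chat k j * xhat j) ≤
        Finset.univ.sup' Finset.univ_nonempty fun k => ∑ j, chat k j * x j) :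
    ∀ x ∈ X,
      (Finset.univ.sup' Finset.univ_nonempty fun i => ∑ j, c i j * xhat j) ≤
        (1 / t) * (Finset.univ.sup' Finset.univ_nonempty fun i => ∑ j, c i j * x j) :=
  stmt_5_general c X hXnonneg t ht lam mu hlam_nonneg hlam_sum hmu_nonneg hmu_sum hfeas chat hchat
    xhat hxhat hopt
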